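/- For an integer n > 1 and a Boolean algebra B, the supremum of cardinalities of n-independent families in the weak product ∏^w_{i<ω} B equals the corresponding supremum for (∏^w_{i<ω} B) × (∏^w_{i<ω} B); i.e., ind_n(∏^w_{i<ω}B) = ind_n(∏^w_{i<ω}B × ∏^w_{i<ω}B). -/

import Mathlib

open Cardinal

/-- A set `Y` in a Boolean algebra is `m`-independent if every Boolean
combination of `m` distinct members of `Y` (with arbitrary complementation
pattern) is nonzero. -/
def NIndepSet {A : Type u} [BooleanAlgebra A] (m : ℕ) (Y : Set A) : Prop :=
  ∀ s t : Finset A, ↑s ⊆ Y → ↑t ⊆ Y → Disjoint s t → s.card + t.card = m →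
    (s.inf id) ⊓ (t.inf fun b => bᶜ) ≠ ⊥

/-- `ind_n` of a subalgebra `P` (given as a subset of an ambient Boolean
algebra): the supremum of the cardinalities of `n`-independent subsets of `P`. -/
noncomputable def indN {A : Type u} [BooleanAlgebra A] (m : ℕ) (P : Set A) :
    Cardinal.{u} :=
  sSup {c | ∃ Y : Set A, Y ⊆ P ∧ NIndepSet m Y ∧ #Y = c}

/-- The weak product `∏^w_{i<ω} B`: sequences in `B^ω` which are eventually
constantly `0` or eventually constantly `1`. -/
def weakProd (B : Type u) [BooleanAlgebra B] : Set (ℕ → B) :=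
  {f | ∃ N : ℕ, (∀ m ≥ N, f m = ⊥) ∨ (∀ m ≥ N, f m = ⊤)}

/-!
An `n`-independent family `Y ⊆ ∏^w B × ∏^w B` is the increasing union of its pieces `Y_m`
of pairs whose first coordinate is constant from `m` on. Such pairs form a Boolean
subalgebra on which the homomorphism keeping the first `m + 1` entries of the first
coordinate and then appending the whole second coordinate is injective, so it carries
`Y_m` to an `n`-independent family in `∏^w B`: `|Y_m| ≤ ind_n(∏^w B)`. A countable
increasing union of sets of size at most `κ` has size at most `κ`, hence
`ind_n(∏^w B × ∏^w B) ≤ ind_n(∏^w B)`; the diagonal embedding gives the reverse inequality.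
-/

open Set Filter

namespace NIndepSet

variable {A₁ A₂ : Type*} [BooleanAlgebra A₁] [BooleanAlgebra A₂] {n : ℕ}

lemma mono {Y Z : Set A₁} (hY : NIndepSet n Y) (hZY : Z ⊆ Y) : NIndepSet n Z :=
  fun s t hs ht => hY s t (hs.trans hZY) (ht.trans hZY)

lemma image {φ : BoundedLatticeHom A₁ A₂} {S : BooleanSubalgebra A₁} (hφ : InjOn φ S)
    {Y : Set A₁} (hYS : Y ⊆ S) (hY : NIndepSet n Y) : NIndepSet n (φ '' Y) := by
  classical
  intro s' t' hs' ht' hdisj hcard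
  obtain ⟨s, hsY, rfl⟩ := Finset.subset_set_image_iff.1 hs'
  obtain ⟨t, htY, rfl⟩ := Finset.subset_set_image_iff.1 ht'
  have hφY : InjOn φ Y := hφ.mono hYS
  rw [Finset.card_image_of_injOn (hφY.mono hsY),
    Finset.card_image_of_injOn (hφY.mono htY)] at hcard
  have hne := hY s t hsY htY hdisj.of_image_finset hcard
  have hmem : (s.inf id) ⊓ (t.inf fun b => bᶜ) ∈ S :=
    S.inf_mem (Finset.inf_mem _ S.top_mem (fun _ ha _ hb => S.inf_mem ha hb) _ _
        fun a ha => hYS (hsY ha))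
      (Finset.inf_mem _ S.top_mem (fun _ ha _ hb => S.inf_mem ha hb) _ _
        fun a ha => S.compl_mem (hYS (htY ha)))
  have hmap : φ ((s.inf id) ⊓ (t.inf fun b => bᶜ))
      = ((s.image φ).inf id) ⊓ ((t.image φ).inf fun b => bᶜ) := by
    simp [map_finset_inf, Finset.inf_image, Function.comp_def]
  rw [← hmap, ← map_bot φ]
  exact fun h => hne (hφ hmem S.bot_mem h)

end NIndepSet

section IndN

variable {A₁ A₂ : Type u} [BooleanAlgebra A₁] [BooleanAlgebra A₂] {n : ℕ}

lemma mk_le_indN {P Y : Set A₁} (hYP : Y ⊆ P) (hY : NIndepSet n Y) : #Y ≤ indN n P :=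
  le_csSup ⟨#A₁, by rintro _ ⟨Z, -, -, rfl⟩; exact mk_set_le Z⟩ ⟨Y, hYP, hY, rfl⟩

lemma indN_le {P : Set A₁} {c : Cardinal.{u}} (h : ∀ Y ⊆ P, NIndepSet n Y → #Y ≤ c) :
    indN n P ≤ c :=
  csSup_le' <| by rintro _ ⟨Y, hYP, hY, rfl⟩; exact h Y hYP hY

lemma mk_le_indN_of_injOn {φ : BoundedLatticeHom A₁ A₂} {S : BooleanSubalgebra A₁}
    (hφ : InjOn φ S) {Y : Set A₁} (hYS : Y ⊆ S) (hY : NIndepSet n Y) {Q : Set A₂}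
    (hYQ : MapsTo φ Y Q) : #Y ≤ indN n Q :=
  (mk_image_eq_of_injOn _ _ (hφ.mono hYS)).ge.trans
    (mk_le_indN hYQ.image_subset (hY.image hφ hYS))

end IndN

def BoundedLatticeHom.diag (α : Type*) [Lattice α] [BoundedOrder α] :
    BoundedLatticeHom α (α × α) where
  toFun a := (a, a)
  map_sup' _ _ := rfl
  map_inf' _ _ := rfl
  map_top' := rfl
  map_bot' := rfl

section Splice

def spliceHom (β : Type*) [Lattice β] [BoundedOrder β] (m : ℕ) :
    BoundedLatticeHom ((ℕ → β) × (ℕ → β)) (ℕ → β) where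
  toFun x i := if i ≤ m then x.1 i else x.2 (i - (m + 1))
  map_sup' x y := by funext i; simp only [Pi.sup_apply]; split_ifs <;> rfl
  map_inf' x y := by funext i; simp only [Pi.inf_apply]; split_ifs <;> rfl
  map_top' := by funext i; split_ifs <;> rfl
  map_bot' := by funext i; split_ifs <;> rfl

variable {β : Type*} [Lattice β] [BoundedOrder β]

lemma spliceHom_apply_of_le {m i : ℕ} (hi : i ≤ m) (x : (ℕ → β) × (ℕ → β)) :
    spliceHom β m x i = x.1 i :=
  if_pos hi

lemma spliceHom_apply_add (m j : ℕ) (x : (ℕ → β) × (ℕ → β)) :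
    spliceHom β m x (m + 1 + j) = x.2 j := by
  simp only [spliceHom, BoundedLatticeHom.coe_mk, LatticeHom.coe_mk, SupHom.coe_mk]
  rw [if_neg (by omega), Nat.add_sub_cancel_left]

lemma spliceHom_injOn {m : ℕ} {S : Set ((ℕ → β) × (ℕ → β))}
    (hS : ∀ y ∈ S, ∀ k ≥ m, y.1 k = y.1 m) : InjOn (spliceHom β m) S := by
  intro x hx y hy hxy
  have hle : ∀ i ≤ m, x.1 i = y.1 i := fun i hi => by
    simpa only [spliceHom_apply_of_le hi] using congrFun hxy i
  refine Prod.ext (funext fun i => ?_) (funext fun j => ?_)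
  · rcases le_total i m with hi | hi
    · exact hle i hi
    · rw [hS x hx i hi, hS y hy i hi, hle m le_rfl]
  · simpa only [spliceHom_apply_add] using congrFun hxy (m + 1 + j)

end Splice

section WeakProd

def stableFrom (B : Type*) [BooleanAlgebra B] (m : ℕ) :
    BooleanSubalgebra ((ℕ → B) × (ℕ → B)) where
  carrier := {y | ∀ k ≥ m, y.1 k = y.1 m}
  supClosed' x hx y hy k hk := by simp [hx k hk, hy k hk]
  infClosed' x hx y hy k hk := by simp [hx k hk, hy k hk]
  compl_mem' hx k hk := by simp [hx k hk]
  bot_mem' _ _ := rfl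

variable {B : Type u} [BooleanAlgebra B]

lemma eventually_mem_stableFrom {y : (ℕ → B) × (ℕ → B)} (hy : y.1 ∈ weakProd B) :
    ∀ᶠ m in atTop, y ∈ stableFrom B m := by
  obtain ⟨N, hN⟩ := hy
  refine eventually_atTop.2 ⟨N, fun m hm k hk => ?_⟩
  rcases hN with hN | hN <;> rw [hN k (hm.trans hk), hN m hm]

lemma spliceHom_mem_weakProd (m : ℕ) {x : (ℕ → B) × (ℕ → B)} (hx : x.2 ∈ weakProd B) :
    spliceHom B m x ∈ weakProd B := by
  obtain ⟨N, hN⟩ := hx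
  refine ⟨m + 1 + N, hN.imp (fun h k hk => ?_) (fun h k hk => ?_)⟩ <;>
  · obtain ⟨j, rfl⟩ := Nat.exists_eq_add_of_le (le_of_add_le_left hk)
    rw [spliceHom_apply_add]
    exact h j (by omega)

end WeakProd

theorem stmt14_general {B : Type u} [BooleanAlgebra B] (n : ℕ) :
    indN n (weakProd B) =
      indN n ((weakProd B) ×ˢ (weakProd B) : Set ((ℕ → B) × (ℕ → B))) := by
  apply le_antisymm
  · refine indN_le fun Y hYW hY => ?_
    exact mk_le_indN_of_injOn (φ := BoundedLatticeHom.diag _) (S := ⊤)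
      (fun a _ b _ h => congrArg Prod.fst h) (fun _ _ => trivial) hY
      fun a ha => ⟨hYW ha, hYW ha⟩
  · refine indN_le fun Y hYW hY => ?_
    refine mk_subtype_le_of_countable_eventually_mem (l := atTop)
      (f := fun m => Y ∩ stableFrom B m)
      (fun y hy => (eventually_mem_stableFrom (hYW hy).1).mono fun _ hm => ⟨hy, hm⟩)
      fun m => ?_
    exact mk_le_indN_of_injOn (spliceHom_injOn fun _ hy => hy) inter_subset_right
      (hY.mono inter_subset_left) fun y hy => spliceHom_mem_weakProd m (hYW hy.1).2

/-- For `n > 1`, `ind_n(∏^w_{i<ω} B) = ind_n(∏^w_{i<ω} B × ∏^w_{i<ω} B)`. -/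
theorem stmt14 {B : Type u} [BooleanAlgebra B] (n : ℕ) (hn : 1 < n) :
    indN n (weakProd B) =
      indN n ((weakProd B) ×ˢ (weakProd B) : Set ((ℕ → B) × (ℕ → B))) :=
  stmt14_general n
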